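/- Define U_XOR = (e^{iπ/4 σ_z} ⊗ e^{−iπ/4 τ_z}) · V · (e^{iπ/2 σ_z} ⊗ I) · V, where V = (e^{−iπ/4}/√2)(I₄ + i U_sw) is a square root of the swap gate and the exponentials are matrix exponentials of the 2×2 diagonal Pauli matrix σ_z = τ_z = diag(1,−1). Then U_XOR = i·Q_π, where Q_π = diag(1,1,1,−1). -/
import Mathlib


open Matrix Kronecker

/-- The swap gate on ℂ²⊗ℂ². -/
noncomputable def Usw : Matrix (Fin 2 × Fin 2) (Fin 2 × Fin 2) ℂ :=
  Matrix.of fun p q => if p = (q.2, q.1) then 1 else 0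

/-- A square root of the swap gate: V = (e^{−iπ/4}/√2)(I + i U_sw). -/
noncomputable def Vsw : Matrix (Fin 2 × Fin 2) (Fin 2 × Fin 2) ℂ :=
  (Complex.exp (-(Complex.I * (Real.pi/4 : ℝ))) / (Real.sqrt 2 : ℂ)) • (1 + Complex.I • Usw)

/-- e^{iα σ_z} = diag(e^{iα}, e^{−iα}). -/
noncomputable def expZ (α : ℝ) : Matrix (Fin 2) (Fin 2) ℂ :=
  !![Complex.exp (Complex.I * α), 0; 0, Complex.exp (-(Complex.I * α))]

/-- The quantum phase gate Q_π = diag(1,1,1,−1). -/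
noncomputable def Qpi : Matrix (Fin 2 × Fin 2) (Fin 2 × Fin 2) ℂ :=
  Matrix.of fun p q => if p = q then (if p = (1, 1) then -1 else 1) else 0

lemma exp_I_real (x : ℝ) : Complex.exp (Complex.I * x) = Real.cos x + Real.sin x * Complex.I := by
  rw [mul_comm, Complex.exp_mul_I, Complex.ofReal_cos, Complex.ofReal_sin]

lemma hD : Complex.exp (Complex.I * ((Real.pi : ℂ)/2)) = Complex.I := by
  rw [show ((Real.pi : ℂ)/2) = ((Real.pi/2 : ℝ) : ℂ) by push_cast; ring, exp_I_real,
    Real.cos_pi_div_two, Real.sin_pi_div_two]; simp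

lemma hE : Complex.exp (-(Complex.I * ((Real.pi : ℂ)/2))) = -Complex.I := by
  rw [Complex.exp_neg, hD]; simp

lemma hA : Complex.exp (Complex.I * ((Real.pi : ℂ)/4)) *
    Complex.exp (-(Complex.I * ((Real.pi : ℂ)/4))) = 1 := by
  rw [← Complex.exp_add, show Complex.I * ((Real.pi : ℂ)/4) + -(Complex.I * ((Real.pi : ℂ)/4)) = 0 by ring,
    Complex.exp_zero]

lemma hB : Complex.exp (Complex.I * ((Real.pi : ℂ)/4)) *
    Complex.exp (Complex.I * ((Real.pi : ℂ)/4)) = Complex.I := by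
  rw [← Complex.exp_add, show Complex.I * ((Real.pi : ℂ)/4) + Complex.I * ((Real.pi : ℂ)/4)
    = Complex.I * ((Real.pi : ℂ)/2) by ring, hD]

lemma hC : Complex.exp (-(Complex.I * ((Real.pi : ℂ)/4))) *
    Complex.exp (-(Complex.I * ((Real.pi : ℂ)/4))) = -Complex.I := by
  rw [← Complex.exp_add, show -(Complex.I * ((Real.pi : ℂ)/4)) + -(Complex.I * ((Real.pi : ℂ)/4))
    = -(Complex.I * ((Real.pi : ℂ)/2)) by ring, hE]

lemma hVc : Complex.exp (-(Complex.I * ((Real.pi : ℂ)/4))) / ((Real.sqrt 2 : ℝ) : ℂ)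
    = (1 - Complex.I)/2 := by
  have h4 : Complex.exp (-(Complex.I * ((Real.pi : ℂ)/4)))
      = ((Real.sqrt 2 / 2 : ℝ) : ℂ) * (1 - Complex.I) := by
    rw [show -(Complex.I * ((Real.pi : ℂ)/4)) = Complex.I * ((-(Real.pi/4) : ℝ) : ℂ) by
      push_cast; ring, exp_I_real, Real.cos_neg, Real.sin_neg, Real.cos_pi_div_four,
      Real.sin_pi_div_four]
    push_cast; ring
  have h0 : ((Real.sqrt 2 : ℝ) : ℂ) ≠ 0 := by
    simpa using Real.sqrt_ne_zero'.mpr (by norm_num : (0:ℝ) < 2)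
  rw [h4]
  push_cast
  field_simp


set_option maxHeartbeats 1000000 in
theorem Uxor_eq_i_Qpi :
    (expZ (Real.pi/4) ⊗ₖ expZ (-(Real.pi/4))) * Vsw *
      (expZ (Real.pi/2) ⊗ₖ (1 : Matrix (Fin 2) (Fin 2) ℂ)) * Vsw
    = Complex.I • Qpi := by
  have h3 : Complex.I^3 = -Complex.I := by rw [pow_succ, Complex.I_sq]; ring
  have h5 : Complex.I^5 = Complex.I := by
    rw [show (5:ℕ) = 2+3 from rfl, pow_add, Complex.I_sq, h3]; ring
  have h6 : Complex.I^6 = -1 := by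
    rw [show (6:ℕ) = 3+3 from rfl, pow_add, h3, neg_mul_neg, Complex.I_mul_I]
  ext ⟨i,j⟩ ⟨k,l⟩
  fin_cases i <;> fin_cases j <;> fin_cases k <;> fin_cases l <;>
  · simp only [Usw, Vsw, expZ, Qpi, Matrix.mul_apply, Fintype.sum_prod_type,
      Matrix.kroneckerMap_apply, Matrix.one_apply, Fin.sum_univ_two, Matrix.smul_apply,
      Matrix.add_apply, Matrix.of_apply, Matrix.cons_val', Matrix.cons_val_zero,
      Matrix.cons_val_one, Matrix.head_cons, Matrix.head_fin_const, Matrix.empty_val',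
      Matrix.cons_val_fin_one, smul_eq_mul, Prod.mk.injEq]
    norm_num [Prod.ext_iff]
    try simp only [hVc, hA, hB, hC, hD, hE, mul_assoc, mul_comm, mul_left_comm]
    try ring_nf
    try simp only [h3, h5, h6, Complex.I_sq]
    try ring
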